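/- For every R > 0, the set {γ_k(R) : k ≥ 2} is bounded above, and its supremum γ*(R) := sup{γ_k(R) : k ≥ 2} is finite and strictly positive. -/

import Mathlib

/-- The modified Bessel function of the first kind of order `m`:
`I_m(r) = ∑ (r/2)^(m+2n) / (n! Γ(m+n+1))`. -/
noncomputable def besselI (m r : ℝ) : ℝ :=
  ∑' n : ℕ, (r / 2) ^ (m + 2 * (n : ℝ)) / ((n.factorial : ℝ) * Real.Gamma (m + (n : ℝ) + 1))

/-- `h_k(R) = ((k²+k)/2 - 1)·I_{k+3/2}(R)/(R·I_{k+1/2}(R))`. -/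
noncomputable def hfun (k : ℕ) (R : ℝ) : ℝ :=
  (((k : ℝ) ^ 2 + k) / 2 - 1) * (besselI ((k : ℝ) + 3 / 2) R / (R * besselI ((k : ℝ) + 1 / 2) R))

/-- `j_k(R) = 1 - 3 I_{3/2}(R)/(R I_{1/2}(R)) - I_{3/2}(R) I_{k+3/2}(R)/(I_{1/2}(R) I_{k+1/2}(R))`. -/
noncomputable def jfun (k : ℕ) (R : ℝ) : ℝ :=
  1 - 3 * besselI (3 / 2) R / (R * besselI (1 / 2) R)
    - besselI (3 / 2) R * besselI ((k : ℝ) + 3 / 2) R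
      / (besselI (1 / 2) R * besselI ((k : ℝ) + 1 / 2) R)

/-- `γ_k(R) = j_k(R)·R/(h_k(R) + j_k(R))`. -/
noncomputable def gammafun (k : ℕ) (R : ℝ) : ℝ :=
  jfun k R * R / (hfun k R + jfun k R)

/-!
Comparing the series termwise gives `I_{m+1}(r) < r/(2(m+1)) · I_m(r)` for `m > -1`. Hence
`I_{3/2}(R)/I_{1/2}(R) < R/3` and `I_{k+3/2}(R)/I_{k+1/2}(R) → 0`, so `j_k(R)` tends to
`1 - 3 I_{3/2}(R)/(R I_{1/2}(R)) > 0`, while `h_k(R) ≥ 0` for `k ≥ 1`. For all large `k` therefore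
`γ_k(R) = j_k R/(h_k + j_k) ∈ (0, R]`: the set is bounded above, the finitely many remaining values
being harmless, and its supremum is positive.
-/

open Filter Topology Set

noncomputable def besselITerm (m r : ℝ) (n : ℕ) : ℝ :=
  (r / 2) ^ (m + 2 * (n : ℝ)) / ((n.factorial : ℝ) * Real.Gamma (m + (n : ℝ) + 1))

section BesselI

variable {m r : ℝ}

lemma besselI_eq_tsum (m r : ℝ) : besselI m r = ∑' n, besselITerm m r n := rfl

lemma add_natCast_add_one_pos (hm : -1 < m) (n : ℕ) : 0 < m + n + 1 := by
  have : (0 : ℝ) ≤ n := n.cast_nonneg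
  linarith

lemma besselITerm_pos (hm : -1 < m) (hr : 0 < r) (n : ℕ) : 0 < besselITerm m r n := by
  have := Real.rpow_pos_of_pos (half_pos hr) (m + 2 * (n : ℝ))
  have := Real.Gamma_pos_of_pos (add_natCast_add_one_pos hm n)
  unfold besselITerm
  positivity

lemma besselITerm_succ (hm : -1 < m) (hr : 0 < r) (n : ℕ) :
    besselITerm m r (n + 1) = besselITerm m r n * ((r / 2) ^ 2 / ((n + 1) * (m + n + 1))) := by
  have hmn := add_natCast_add_one_pos hm n
  have := Real.rpow_pos_of_pos (half_pos hr) (m + 2 * (n : ℝ))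
  have := Real.Gamma_pos_of_pos hmn
  unfold besselITerm
  rw [show m + 2 * ((n + 1 : ℕ) : ℝ) = m + 2 * n + (2 : ℕ) by push_cast; ring,
    Real.rpow_add (half_pos hr), Real.rpow_natCast,
    show m + ((n + 1 : ℕ) : ℝ) + 1 = m + n + 1 + 1 by push_cast; ring,
    Real.Gamma_add_one hmn.ne', Nat.factorial_succ]
  push_cast
  field_simp

lemma besselITerm_add_one (hm : -1 < m) (hr : 0 < r) (n : ℕ) :
    besselITerm (m + 1) r n = besselITerm m r n * (r / 2 / (m + n + 1)) := by
  have hmn := add_natCast_add_one_pos hm n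
  have := Real.Gamma_pos_of_pos hmn
  unfold besselITerm
  rw [show m + 1 + 2 * (n : ℝ) = m + 2 * n + 1 by ring, Real.rpow_add (half_pos hr),
    Real.rpow_one, show m + 1 + (n : ℝ) + 1 = m + n + 1 + 1 by ring,
    Real.Gamma_add_one hmn.ne']
  field_simp

lemma summable_besselITerm (hm : -1 < m) (hr : 0 < r) : Summable (besselITerm m r) := by
  refine summable_of_ratio_norm_eventually_le (r := 1 / 2) (by norm_num) ?_
  filter_upwards [eventually_ge_atTop (⌈r ^ 2⌉₊ + 1)] with n hn
  have hn' : r ^ 2 + 1 ≤ (n : ℝ) := by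
    have := Nat.le_ceil (r ^ 2)
    have : ((⌈r ^ 2⌉₊ + 1 : ℕ) : ℝ) ≤ n := by exact_mod_cast hn
    push_cast at this
    linarith
  have hmn := add_natCast_add_one_pos hm n
  have hpos := besselITerm_pos hm hr n
  rw [besselITerm_succ hm hr, Real.norm_of_nonneg hpos.le,
    Real.norm_of_nonneg (mul_pos hpos (by positivity)).le, mul_comm (1 / 2)]
  refine mul_le_mul_of_nonneg_left ?_ hpos.le
  rw [div_le_iff₀ (by positivity)]
  nlinarith

lemma besselI_pos (hm : -1 < m) (hr : 0 < r) : 0 < besselI m r :=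
  (summable_besselITerm hm hr).tsum_pos (fun n ↦ (besselITerm_pos hm hr n).le) 0
    (besselITerm_pos hm hr 0)

lemma besselI_add_one_lt (hm : -1 < m) (hr : 0 < r) :
    besselI (m + 1) r < r / (2 * (m + 1)) * besselI m r := by
  have hfactor (n : ℕ) : r / 2 / (m + n + 1) ≤ r / (2 * (m + 1)) := by
    rw [div_div, mul_comm 2]
    exact div_le_div_of_nonneg_left hr.le (by linarith) (by have := n.cast_nonneg (α := ℝ); nlinarith)
  rw [besselI_eq_tsum, besselI_eq_tsum, ← tsum_mul_left]
  refine Summable.tsum_lt_tsum (i := 1) (fun n ↦ ?_) ?_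
    (summable_besselITerm (by linarith) hr) ((summable_besselITerm hm hr).mul_left _)
  · rw [besselITerm_add_one hm hr, mul_comm]
    exact mul_le_mul_of_nonneg_right (hfactor n) (besselITerm_pos hm hr n).le
  · rw [besselITerm_add_one hm hr, mul_comm]
    refine mul_lt_mul_of_pos_right ?_ (besselITerm_pos hm hr 1)
    rw [div_div, mul_comm 2]
    exact div_lt_div_of_pos_left hr (by linarith) (by push_cast; linarith)

end BesselI

lemma tendsto_besselI_ratio_atTop {r : ℝ} (hr : 0 < r) :
    Tendsto (fun k : ℕ ↦ besselI (k + 3 / 2) r / besselI (k + 1 / 2) r) atTop (𝓝 0) := by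
  have hm (k : ℕ) : -1 < (k : ℝ) + 1 / 2 := by have := k.cast_nonneg (α := ℝ); linarith
  have hupper : Tendsto (fun k : ℕ ↦ r / (2 * ((k + 1 / 2 : ℝ) + 1))) atTop (𝓝 0) :=
    tendsto_const_nhds.div_atTop <| Tendsto.const_mul_atTop two_pos <|
      (tendsto_natCast_atTop_atTop.atTop_add tendsto_const_nhds).atTop_add tendsto_const_nhds
  refine tendsto_of_tendsto_of_tendsto_of_le_of_le tendsto_const_nhds hupper
    (fun k ↦ (div_pos (besselI_pos (by linarith [hm k]) hr) (besselI_pos (hm k) hr)).le)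
    (fun k ↦ ?_)
  rw [show (k : ℝ) + 3 / 2 = k + 1 / 2 + 1 by ring, div_le_iff₀ (besselI_pos (hm k) hr)]
  exact (besselI_add_one_lt (hm k) hr).le

section Gamma

variable {R : ℝ}

lemma jfun_eq (k : ℕ) (R : ℝ) :
    jfun k R = 1 - 3 * (besselI (3 / 2) R / besselI (1 / 2) R) / R
      - besselI (3 / 2) R / besselI (1 / 2) R * (besselI (k + 3 / 2) R / besselI (k + 1 / 2) R) := by
  rw [jfun]
  ring

lemma three_mul_besselI_ratio_div_lt_one (hR : 0 < R) :
    3 * (besselI (3 / 2) R / besselI (1 / 2) R) / R < 1 := by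
  have h := besselI_add_one_lt (m := 1 / 2) (by norm_num) hR
  rw [show (1 / 2 : ℝ) + 1 = 3 / 2 by norm_num] at h
  rw [div_lt_one hR, ← mul_div_assoc, div_lt_iff₀ (besselI_pos (by norm_num) hR)]
  linarith

lemma eventually_jfun_pos (hR : 0 < R) : ∀ᶠ k in atTop, 0 < jfun k R := by
  have h : Tendsto (fun k : ℕ ↦ jfun k R) atTop
      (𝓝 (1 - 3 * (besselI (3 / 2) R / besselI (1 / 2) R) / R)) := by
    simp only [jfun_eq]
    simpa using tendsto_const_nhds.sub (tendsto_const_nhds.mul (tendsto_besselI_ratio_atTop hR))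
  exact h.eventually_const_lt (sub_pos.2 (three_mul_besselI_ratio_div_lt_one hR))

lemma hfun_nonneg {k : ℕ} (hk : 1 ≤ k) (hR : 0 < R) : 0 ≤ hfun k R := by
  have hk' : (1 : ℝ) ≤ k := by exact_mod_cast hk
  have := besselI_pos (m := k + 3 / 2) (by linarith) hR
  have := besselI_pos (m := k + 1 / 2) (by linarith) hR
  exact mul_nonneg (by nlinarith) (by positivity)

lemma mul_div_add_mem_Ioc {h j : ℝ} (hh : 0 ≤ h) (hj : 0 < j) (hR : 0 < R) :
    j * R / (h + j) ∈ Ioc 0 R :=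
  ⟨by positivity, (div_le_iff₀ (by positivity)).2 (by nlinarith)⟩

lemma eventually_gammafun_mem_Ioc (hR : 0 < R) : ∀ᶠ k in atTop, gammafun k R ∈ Ioc 0 R := by
  filter_upwards [eventually_ge_atTop 1, eventually_jfun_pos hR] with k hk hj
  exact mul_div_add_mem_Ioc (hfun_nonneg hk hR) hj hR

end Gamma

/-- The set `{γ_k(R) : k ≥ 2}` is bounded above and its supremum
`γ*(R)` is strictly positive. -/
theorem stmt13 (R : ℝ) (hR : 0 < R) :
    BddAbove {x : ℝ | ∃ k : ℕ, 2 ≤ k ∧ x = gammafun k R} ∧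
    0 < sSup {x : ℝ | ∃ k : ℕ, 2 ≤ k ∧ x = gammafun k R} := by
  have hev := (eventually_ge_atTop 2).and (eventually_gammafun_mem_Ioc hR)
  have hbdd : BddAbove {x : ℝ | ∃ k : ℕ, 2 ≤ k ∧ x = gammafun k R} := by
    refine (isBoundedUnder_of_eventually_le (hev.mono fun _ hk ↦ hk.2.2)).bddAbove_range.mono ?_
    rintro _ ⟨k, -, rfl⟩
    exact ⟨k, rfl⟩
  obtain ⟨k, hk, hpos, -⟩ := hev.exists
  exact ⟨hbdd, hpos.trans_le (le_csSup hbdd ⟨k, hk, rfl⟩)⟩
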